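/- Let (T(t)) and (S(t)) be C₀-semigroups on a Banach space E, with (A,dom(A)) the generator of (T(t)), 0 ∈ ρ(A), and extrapolation data (E₋₁,ι,T₋₁,A₋₁). Let (𝒰(t)) and (𝒱(t)) be the semigroups on 𝓛(E) left implemented by (T(t)) and (S(t)), with (𝒢,dom(𝒢)) the generator of (𝒰(t)). Then for t₀ > 0 the following are equivalent: (i) there exists 𝒦 ∈ 𝒮^{DS,τ_sot}_{t₀}(𝒰) with Ran(𝒦) ⊆ F₀(𝒢) such that (𝒱(t)) is generated by (𝒢₋₁+𝒦)|_{𝓛(E)}; (ii) there exists B ∈ 𝒮^{DS}_{t₀}(T) with Ran(B) ⊆ F₀(A) such that (S(t)) is generated by (A₋₁+B)|_E. -/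

import Mathlib

/-!
Both directions go through rank-one operators `ψ ⊗ x := ψ.smulRight x`.

Given `B`, the perturbation `𝒦 C := B ∘ C` acts column by column, so its Volterra operator is
assembled from the one of `B`, applied to `r ↦ F(r) C`. Bi-equicontinuity needs the bound
`‖V_B F (t) x‖ ≤ q · sup_r ‖F(r) x‖`, vector by vector.

Given `𝒦`, fix `ψ` and `z` with `ψ z = 1` and compress: `B x := 𝒦(ψ ⊗ x) z`. The generator
identity for `ψ ⊗ x` gives `𝒦(ψ ⊗ x) = ψ ⊗ B x` whenever `x` lies in the domain of the generator
of `S`, hence for all `x` since that domain is dense. The Volterra operator of `B` is the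
compression of the one of `𝒦`, applied to the lift `C ↦ ψ ⊗ F(r)(C z)`.
-/

open Set Filter Topology MeasureTheory

variable {E E₁ : Type*} [NormedAddCommGroup E] [NormedSpace ℝ E]
  [NormedAddCommGroup E₁] [NormedSpace ℝ E₁]

/-- A `C₀`-semigroup on a Banach space `E`. -/
structure IsC0Semigroup (T : ℝ → E →L[ℝ] E) : Prop where
  map_zero : T 0 = 1
  map_add : ∀ s t : ℝ, 0 ≤ s → 0 ≤ t → T (s + t) = (T s).comp (T t)
  strongCont : ∀ x : E, ContinuousOn (fun t => T t x) (Ici (0:ℝ))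

/-- The generator relation of a `C₀`-semigroup: `y = Ax`. -/
def C0GenRel (T : ℝ → E →L[ℝ] E) (x y : E) : Prop :=
  Tendsto (fun t : ℝ => t⁻¹ • (T t x - x)) (nhdsWithin 0 (Ioi 0)) (nhds y)

/-- Extrapolation data `(E₋₁, ι, T₋₁, A₋₁)` for a `C₀`-semigroup `T` with `0 ∈ ρ(A)`:
`ι : E → E₋₁` is a continuous dense injection, `T₋₁` a `C₀`-semigroup on `E₋₁` extending `T`
via `ι`, whose generator `A₋₁` has domain `ι(E)`, extends `A`, and `Am = A₋₁ ∘ ι : E → E₋₁`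
is an isomorphism. -/
structure ExtrapolationData (T : ℝ → E →L[ℝ] E) (T₁ : ℝ → E₁ →L[ℝ] E₁)
    (ι : E →L[ℝ] E₁) (Am : E ≃L[ℝ] E₁) : Prop where
  c0T : IsC0Semigroup T
  c0T₁ : IsC0Semigroup T₁
  inj : Function.Injective ι
  dense : DenseRange ι
  intertwine : ∀ t : ℝ, 0 ≤ t → ∀ x : E, T₁ t (ι x) = ι (T t x)
  gen₁ : ∀ x : E, C0GenRel T₁ (ι x) (Am x)
  gen₁_dom : ∀ z y : E₁, C0GenRel T₁ z y → z ∈ Set.range ι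
  gen_extends : ∀ x y : E, C0GenRel T x y → (Am x : E₁) = ι y
  zero_res : ∃ R : E →L[ℝ] E, (∀ y : E, C0GenRel T (R y) y) ∧
    ∀ x y : E, C0GenRel T x y → x = R y

/-- The Desch–Schappacher admissibility class `𝒮^{DS}_{t₀}(T)` for a `C₀`-semigroup:
for every strongly continuous `𝓛(E)`-valued `F` the Volterra integrals take values in `ι(E)`,
give a strongly continuous `𝓛(E)`-valued function `V_B F`, and `‖V_B‖ ≤ q < 1`. -/
def MemSDS (T₁ : ℝ → E₁ →L[ℝ] E₁) (ι : E →L[ℝ] E₁) (B : E →L[ℝ] E₁) (t₀ : ℝ) : Prop :=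
  ∃ q : ℝ, 0 ≤ q ∧ q < 1 ∧
    ∀ F : ℝ → E →L[ℝ] E, (∀ x : E, ContinuousOn (fun r => F r x) (Icc (0:ℝ) t₀)) →
      ∃ G : ℝ → E →L[ℝ] E,
        (∀ t ∈ Icc (0:ℝ) t₀, ∀ x : E,
          ι (G t x) = ∫ r in (0:ℝ)..t, T₁ (t - r) (B (F r x))) ∧
        (∀ x : E, ContinuousOn (fun t => G t x) (Icc (0:ℝ) t₀)) ∧
        ∀ c : ℝ, (∀ s ∈ Icc (0:ℝ) t₀, ‖F s‖ ≤ c) → ∀ t ∈ Icc (0:ℝ) t₀, ‖G t‖ ≤ q * c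

/-- The semigroup on `𝓛(E)` left implemented by `T`: `𝒰(t)C := T(t) ∘ C`. -/
noncomputable def implemented (T : ℝ → E →L[ℝ] E) (t : ℝ) :
    (E →L[ℝ] E) →L[ℝ] (E →L[ℝ] E) :=
  ContinuousLinearMap.compL ℝ E E E (T t)

/-- The extrapolated implemented semigroup on `𝓛(E,E₋₁)`: `𝒰₋₁(t)S := T₋₁(t) ∘ S`. -/
noncomputable def implementedExt (T₁ : ℝ → E₁ →L[ℝ] E₁) (t : ℝ) :
    (E →L[ℝ] E₁) →L[ℝ] (E →L[ℝ] E₁) :=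
  ContinuousLinearMap.compL ℝ E E₁ E₁ (T₁ t)

/-- Membership in the space `𝔛_{t₀}` of strongly `τ_sot`-continuous, norm-bounded,
bi-equicontinuous functions `F : [0,t₀] → 𝓛(𝓛(E))`. -/
def MemXsot (t₀ : ℝ) (F : ℝ → (E →L[ℝ] E) →L[ℝ] (E →L[ℝ] E)) : Prop :=
  (∀ (C : E →L[ℝ] E) (x : E), ContinuousOn (fun t => (F t C) x) (Icc (0:ℝ) t₀)) ∧
  (∃ M : ℝ, ∀ t ∈ Icc (0:ℝ) t₀, ‖F t‖ ≤ M) ∧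
  ∀ u : ℕ → E →L[ℝ] E, (∃ c : ℝ, ∀ n, ‖u n‖ ≤ c) →
    (∀ x : E, Tendsto (fun n => u n x) atTop (nhds (0:E))) →
    ∀ x : E, ∀ ε > (0:ℝ), ∃ N : ℕ, ∀ n ≥ N, ∀ t ∈ Icc (0:ℝ) t₀, ‖(F t (u n)) x‖ < ε

/-- The Desch–Schappacher admissibility class `𝒮^{DS,τ_sot}_{t₀}(𝒰)` for the implemented
semigroup: `𝒦 : 𝓛(E) → 𝓛(E,E₋₁)` is `τ_sot`-to-`τ_sot` continuous, and the Volterra operator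
`(V_𝒦 F)(t)C = ∫₀ᵗ 𝒰₋₁(t-r) 𝒦(F(r)C) dr` takes values in `𝓛(E)`, maps `𝔛_{t₀}` into itself
and has `‖V_𝒦‖ ≤ q < 1`. -/
def MemSDSsot (T₁ : ℝ → E₁ →L[ℝ] E₁) (ι : E →L[ℝ] E₁)
    (K : (E →L[ℝ] E) →L[ℝ] (E →L[ℝ] E₁)) (t₀ : ℝ) : Prop :=
  (∀ x : E, ∃ (v : Finset E) (c : ℝ), 0 ≤ c ∧
      ∀ S : E →L[ℝ] E, ‖(K S) x‖ ≤ c * ∑ y ∈ v, ‖S y‖) ∧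
  ∃ q : ℝ, 0 ≤ q ∧ q < 1 ∧
    ∀ F : ℝ → (E →L[ℝ] E) →L[ℝ] (E →L[ℝ] E), MemXsot t₀ F →
      ∃ G : ℝ → (E →L[ℝ] E) →L[ℝ] (E →L[ℝ] E), MemXsot t₀ G ∧
        (∀ t ∈ Icc (0:ℝ) t₀, ∀ (C : E →L[ℝ] E) (x : E),
          ι ((G t C) x) = ∫ r in (0:ℝ)..t, T₁ (t - r) ((K (F r C)) x)) ∧
        ∀ c : ℝ, (∀ s ∈ Icc (0:ℝ) t₀, ‖F s‖ ≤ c) → ∀ t ∈ Icc (0:ℝ) t₀, ‖G t‖ ≤ q * c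

/-- A `τ_sot`-bi-continuous semigroup on `𝓛(E)`. -/
structure IsBiContSotSemigroup (U : ℝ → (E →L[ℝ] E) →L[ℝ] (E →L[ℝ] E)) : Prop where
  map_zero : U 0 = 1
  map_add : ∀ s t : ℝ, 0 ≤ s → 0 ≤ t → U (s + t) = (U s).comp (U t)
  strongCont : ∀ (C : E →L[ℝ] E) (x : E), ContinuousOn (fun t => (U t C) x) (Ici (0:ℝ))
  expBound : ∃ M : ℝ, 1 ≤ M ∧ ∃ ω : ℝ, ∀ t : ℝ, 0 ≤ t → ‖U t‖ ≤ M * Real.exp (ω * t)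
  biequi : ∀ t₀ : ℝ, 0 < t₀ → ∀ u : ℕ → E →L[ℝ] E, (∃ c : ℝ, ∀ n, ‖u n‖ ≤ c) →
    (∀ x : E, Tendsto (fun n => u n x) atTop (nhds (0:E))) →
    ∀ x : E, ∀ ε > (0:ℝ), ∃ N : ℕ, ∀ n ≥ N, ∀ t ∈ Icc (0:ℝ) t₀, ‖(U t (u n)) x‖ < ε

/-- The generator relation of a `τ_sot`-bi-continuous semigroup on `𝓛(E)`. -/
def SotGenRel (U : ℝ → (E →L[ℝ] E) →L[ℝ] (E →L[ℝ] E)) (C Y : E →L[ℝ] E) : Prop :=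
  (∀ x : E, Tendsto (fun t : ℝ => t⁻¹ • ((U t C) x - C x))
      (nhdsWithin 0 (Ioi 0)) (nhds (Y x))) ∧
    ∃ M : ℝ, ∀ t ∈ Ioc (0:ℝ) 1, ‖U t C - C‖ ≤ M * t

/-- `V` is a `τ_sot`-bi-continuous semigroup on `𝓛(E)` generated by `(𝒢₋₁ + 𝒦)|_{𝓛(E)}`,
where `𝒢₋₁ C = A₋₁ ∘ ι ∘ C` and the domain is `{C : 𝒢₋₁C + 𝒦C ∈ 𝓛(E)}`. -/
def GeneratedByPerturbedImpl (V : ℝ → (E →L[ℝ] E) →L[ℝ] (E →L[ℝ] E))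
    (ι : E →L[ℝ] E₁) (Am : E ≃L[ℝ] E₁)
    (K : (E →L[ℝ] E) →L[ℝ] (E →L[ℝ] E₁)) : Prop :=
  IsBiContSotSemigroup V ∧ ∀ C Y : E →L[ℝ] E,
    SotGenRel V C Y ↔ ι.comp Y = ((Am : E →L[ℝ] E₁)).comp C + K C

section General

variable {F G : Type*} [NormedAddCommGroup F] [NormedSpace ℝ F]
  [NormedAddCommGroup G] [NormedSpace ℝ G]

theorem hasDerivWithinAt_Ici_iff_tendsto_slope_zero_right {f : ℝ → F} {f' : F} {x : ℝ} :
    HasDerivWithinAt f f' (Ici x) x ↔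
      Tendsto (fun t => t⁻¹ • (f (x + t) - f x)) (𝓝[>] 0) (𝓝 f') := by
  rw [← hasDerivWithinAt_Ioi_iff_Ici,
    hasDerivWithinAt_iff_tendsto_slope' (show x ∉ Ioi x from lt_irrefl x), ← add_zero x,
    ← map_add_left_nhdsGT, tendsto_map'_iff, add_zero]
  simp only [Function.comp_def, slope_def_module, add_sub_cancel_left]

theorem exists_norm_le_of_continuousOn_Icc [CompleteSpace F] {P : ℝ → F →L[ℝ] G} {b : ℝ}
    (hP : ∀ x, ContinuousOn (fun t => P t x) (Icc 0 b)) :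
    ∃ M, ∀ t ∈ Icc (0:ℝ) b, ‖P t‖ ≤ M := by
  have hpt : ∀ x, ∃ C, ∀ t : Icc (0:ℝ) b, ‖P t x‖ ≤ C := fun x =>
    (isCompact_Icc.exists_bound_of_continuousOn (hP x)).imp fun _ hC t => hC t t.2
  obtain ⟨M, hM⟩ := banach_steinhaus hpt
  exact ⟨M, fun t ht => hM ⟨t, ht⟩⟩

theorem exists_norm_le_mul_of_forall_norm_apply_le_mul [CompleteSpace F] {P : ℝ → F →L[ℝ] G}
    (hP : ∀ x, ∃ M, ∀ s ∈ Ioo (0:ℝ) 1, ‖P s x‖ ≤ M * s) :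
    ∃ M, ∀ s ∈ Ioo (0:ℝ) 1, ‖P s‖ ≤ M * s := by
  have hpt : ∀ x, ∃ C, ∀ s : Ioo (0:ℝ) 1, ‖((s : ℝ)⁻¹ • P s) x‖ ≤ C := by
    intro x
    obtain ⟨M, hM⟩ := hP x
    refine ⟨M, fun s => ?_⟩
    have hs : 0 < (s : ℝ) := s.2.1
    rw [smul_apply, norm_smul, norm_inv, Real.norm_of_nonneg hs.le,
      inv_mul_le_iff₀ hs, mul_comm]
    exact hM s s.2
  obtain ⟨M, hM⟩ := banach_steinhaus hpt
  refine ⟨M, fun s hs => ?_⟩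
  have h := hM ⟨s, hs⟩
  rwa [norm_smul, norm_inv, Real.norm_of_nonneg hs.1.le, inv_mul_le_iff₀ hs.1, mul_comm] at h

theorem exists_dual_smul_eq_self (x : F) :
    ∃ φ : StrongDual ℝ F, ‖φ‖ * ‖x‖ ≤ 1 ∧ φ x • x = x := by
  rcases eq_or_ne x 0 with rfl | hx
  · exact ⟨0, by simp, by simp⟩
  have hx' : ‖x‖ ≠ 0 := norm_ne_zero_iff.2 hx
  obtain ⟨g, hg, hgx⟩ := exists_dual_vector ℝ x hx'
  refine ⟨‖x‖⁻¹ • g, ?_, ?_⟩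
  · rw [norm_smul, norm_inv, norm_norm, hg, mul_one, inv_mul_cancel₀ hx']
  · rw [smul_apply, hgx, smul_eq_mul, RCLike.ofReal_real_eq_id, id,
      inv_mul_cancel₀ hx', one_smul]

/-- `ψ z • x = x` says `ψ z = 1` when `F ≠ 0`, and holds trivially when `F = 0`. -/
theorem exists_dual_pair_smul_eq_self :
    ∃ (z : F) (ψ : StrongDual ℝ F), ‖ψ‖ * ‖z‖ ≤ 1 ∧ ∀ x : F, ψ z • x = x := by
  rcases subsingleton_or_nontrivial F with hF | hF
  · exact ⟨0, 0, by simp, fun x => Subsingleton.elim _ _⟩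
  obtain ⟨z, hz⟩ := exists_ne (0 : F)
  obtain ⟨ψ, hψ, hψz⟩ := exists_dual_smul_eq_self z
  have h1 : ψ z = 1 := smul_left_injective ℝ hz (hψz.trans (one_smul ℝ z).symm)
  exact ⟨z, ψ, hψ, fun x => by rw [h1, one_smul]⟩

end General

section RankOne

variable {F G : Type*} [NormedAddCommGroup F] [NormedSpace ℝ F]
  [NormedAddCommGroup G] [NormedSpace ℝ G] (ψ : StrongDual ℝ F) (z : F)

noncomputable def rankOneLift (P : F →L[ℝ] F) : (F →L[ℝ] F) →L[ℝ] (F →L[ℝ] F) :=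
  (ContinuousLinearMap.smulRightL ℝ F F ψ).comp (P.comp (ContinuousLinearMap.apply ℝ F z))

noncomputable def rankOneCompress (Q : (F →L[ℝ] F) →L[ℝ] (F →L[ℝ] G)) : F →L[ℝ] G :=
  (Q.comp (ContinuousLinearMap.smulRightL ℝ F F ψ)).flip z

@[simp]
theorem rankOneLift_apply (P C : F →L[ℝ] F) :
    rankOneLift ψ z P C = ψ.smulRight (P (C z)) := rfl

@[simp]
theorem rankOneCompress_apply (Q : (F →L[ℝ] F) →L[ℝ] (F →L[ℝ] G)) (x : F) :
    rankOneCompress ψ z Q x = Q (ψ.smulRight x) z := rfl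

theorem norm_rankOneLift_le (P : F →L[ℝ] F) : ‖rankOneLift ψ z P‖ ≤ ‖ψ‖ * ‖z‖ * ‖P‖ := by
  refine ContinuousLinearMap.opNorm_le_bound _ (by positivity) fun C => ?_
  rw [rankOneLift_apply, ContinuousLinearMap.norm_smulRight_apply]
  calc ‖ψ‖ * ‖P (C z)‖ ≤ ‖ψ‖ * (‖P‖ * (‖C‖ * ‖z‖)) := by
        gcongr; exact P.le_opNorm_of_le (C.le_opNorm z)
    _ = ‖ψ‖ * ‖z‖ * ‖P‖ * ‖C‖ := by ring

theorem norm_rankOneCompress_le (Q : (F →L[ℝ] F) →L[ℝ] (F →L[ℝ] G)) :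
    ‖rankOneCompress ψ z Q‖ ≤ ‖ψ‖ * ‖z‖ * ‖Q‖ := by
  refine ContinuousLinearMap.opNorm_le_bound _ (by positivity) fun x => ?_
  calc ‖Q (ψ.smulRight x) z‖ ≤ ‖Q‖ * (‖ψ‖ * ‖x‖) * ‖z‖ := by
        refine (Q (ψ.smulRight x)).le_of_opNorm_le ?_ z
        rw [← ContinuousLinearMap.norm_smulRight_apply]
        exact Q.le_opNorm _
    _ = ‖ψ‖ * ‖z‖ * ‖Q‖ * ‖x‖ := by ring

end RankOne

@[simp]
theorem implemented_apply (S : ℝ → E →L[ℝ] E) (t : ℝ) (C : E →L[ℝ] E) (x : E) :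
    implemented S t C x = S t (C x) := rfl

@[simp]
theorem implementedExt_apply (T₁ : ℝ → E₁ →L[ℝ] E₁) (t : ℝ) (C : E →L[ℝ] E₁) (x : E) :
    implementedExt T₁ t C x = T₁ t (C x) := rfl

theorem C0GenRel.const_smul {S : ℝ → E →L[ℝ] E} {x y : E} (h : C0GenRel S x y) (c : ℝ) :
    C0GenRel S (c • x) (c • y) :=
  (Tendsto.const_smul h c).congr fun t => by rw [map_smul, ← smul_sub, smul_comm]

namespace IsC0Semigroup

variable {S : ℝ → E →L[ℝ] E}

theorem apply_zero (hS : IsC0Semigroup S) (x : E) : S 0 x = x := by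
  rw [hS.map_zero]; rfl

theorem apply_add (hS : IsC0Semigroup S) {s t : ℝ} (hs : 0 ≤ s) (ht : 0 ≤ t) (x : E) :
    S (s + t) x = S s (S t x) := by
  rw [hS.map_add s t hs ht]; rfl

theorem exists_norm_le [CompleteSpace E] (hS : IsC0Semigroup S) (b : ℝ) :
    ∃ M, 1 ≤ M ∧ ∀ t ∈ Icc (0:ℝ) b, ‖S t‖ ≤ M := by
  obtain ⟨M, hM⟩ := exists_norm_le_of_continuousOn_Icc (P := S) (b := b)
    fun x => (hS.strongCont x).mono Icc_subset_Ici_self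
  exact ⟨max M 1, le_max_right _ _, fun t ht => (hM t ht).trans (le_max_left _ _)⟩

theorem exists_norm_le_exp [CompleteSpace E] (hS : IsC0Semigroup S) :
    ∃ M, 1 ≤ M ∧ ∃ ω, ∀ t : ℝ, 0 ≤ t → ‖S t‖ ≤ M * Real.exp (ω * t) := by
  obtain ⟨M, hM1, hM⟩ := hS.exists_norm_le 1
  have hM0 : 0 < M := zero_lt_one.trans_le hM1
  have hpow : ∀ n : ℕ, ∀ s ∈ Icc (0:ℝ) 1, ‖S (n + s)‖ ≤ M ^ (n + 1) := by
    intro n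
    induction n with
    | zero => simpa using hM
    | succ n ih =>
      intro s hs
      have hns : 0 ≤ (n : ℝ) + s := add_nonneg n.cast_nonneg hs.1
      rw [show ((n + 1 : ℕ) : ℝ) + s = 1 + (n + s) by push_cast; ring,
        hS.map_add 1 _ zero_le_one hns, pow_succ']
      exact (ContinuousLinearMap.opNorm_comp_le _ _).trans
        (mul_le_mul (hM 1 ⟨zero_le_one, le_rfl⟩) (ih s hs) (norm_nonneg _) hM0.le)
  refine ⟨M, hM1, Real.log M, fun t ht => ?_⟩
  have hfl := Nat.floor_le ht
  calc ‖S t‖ = ‖S (⌊t⌋₊ + (t - ⌊t⌋₊))‖ := by rw [add_sub_cancel]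
    _ ≤ M ^ (⌊t⌋₊ + 1) :=
        hpow _ _ ⟨sub_nonneg.2 hfl, by linarith [Nat.lt_floor_add_one t]⟩
    _ = M * M ^ (⌊t⌋₊ : ℝ) := by rw [Real.rpow_natCast, pow_succ']
    _ ≤ M * M ^ t := by gcongr
    _ = M * Real.exp (Real.log M * t) := by rw [Real.rpow_def_of_pos hM0]

theorem hasDerivWithinAt_of_genRel (hS : IsC0Semigroup S) {x y : E} (hxy : C0GenRel S x y)
    {r : ℝ} (hr : 0 ≤ r) : HasDerivWithinAt (fun s => S s x) (S r y) (Ici r) r := by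
  rw [hasDerivWithinAt_Ici_iff_tendsto_slope_zero_right]
  refine (((S r).continuous.tendsto y).comp hxy).congr' ?_
  filter_upwards [self_mem_nhdsWithin] with t (ht : 0 < t)
  simp only [Function.comp_apply, map_smul, map_sub, hS.apply_add hr ht.le]

theorem exists_norm_apply_sub_le_of_genRel [CompleteSpace E] (hS : IsC0Semigroup S) :
    ∃ M, 0 ≤ M ∧ ∀ x y : E, C0GenRel S x y → ∀ t ∈ Icc (0:ℝ) 1, ‖S t x - x‖ ≤ M * ‖y‖ * t := by
  obtain ⟨M, hM1, hM⟩ := hS.exists_norm_le 1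
  refine ⟨M, zero_le_one.trans hM1, fun x y hxy t ht => ?_⟩
  have h := norm_image_sub_le_of_norm_deriv_right_le_segment
    ((hS.strongCont x).mono Icc_subset_Ici_self)
    (fun r hr => hS.hasDerivWithinAt_of_genRel hxy hr.1)
    (fun r hr => (S r).le_of_opNorm_le (hM r ⟨hr.1, hr.2.le.trans ht.2⟩) y) t ⟨ht.1, le_rfl⟩
  rwa [hS.apply_zero, sub_zero] at h

theorem intervalIntegrable_apply (hS : IsC0Semigroup S) (x : E) {a b : ℝ} (ha : 0 ≤ a)
    (hb : 0 ≤ b) : IntervalIntegrable (fun r => S r x) volume a b :=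
  ((hS.strongCont x).mono fun _ hr => (le_min ha hb).trans hr.1).intervalIntegrable

theorem tendsto_slope_integral [CompleteSpace E] (hS : IsC0Semigroup S) (x : E) {t : ℝ}
    (ht : 0 ≤ t) :
    Tendsto (fun h => h⁻¹ • ((∫ r in (0:ℝ)..t + h, S r x) - ∫ r in (0:ℝ)..t, S r x))
      (𝓝[>] 0) (𝓝 (S t x)) := by
  exact hasDerivWithinAt_Ici_iff_tendsto_slope_zero_right.1
    (intervalIntegral.integral_hasDerivWithinAt_right (hS.intervalIntegrable_apply x le_rfl ht)
      (((hS.strongCont x).mono (Ioi_subset_Ici ht)).stronglyMeasurableAtFilter_nhdsWithin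
        measurableSet_Ioi t)
      ((hS.strongCont x t ht).mono (Ioi_subset_Ici ht)))

theorem tendsto_average_integral [CompleteSpace E] (hS : IsC0Semigroup S) (x : E) :
    Tendsto (fun h => h⁻¹ • ∫ r in (0:ℝ)..h, S r x) (𝓝[>] 0) (𝓝 x) := by
  simpa only [zero_add, intervalIntegral.integral_same, sub_zero, hS.apply_zero] using
    hS.tendsto_slope_integral x le_rfl

theorem apply_integral [CompleteSpace E] (hS : IsC0Semigroup S) (x : E) {h t : ℝ} (hh : 0 ≤ h)
    (ht : 0 ≤ t) :
    S h (∫ r in (0:ℝ)..t, S r x) = (∫ r in (0:ℝ)..h + t, S r x) - ∫ r in (0:ℝ)..h, S r x := by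
  rw [← (S h).intervalIntegral_comp_comm (hS.intervalIntegrable_apply x le_rfl ht),
    intervalIntegral.integral_interval_sub_left (hS.intervalIntegrable_apply x le_rfl
      (add_nonneg hh ht)) (hS.intervalIntegrable_apply x le_rfl hh)]
  have hshift := intervalIntegral.integral_comp_add_left (fun r => S r x) (a := 0) (b := t) h
  rw [add_zero] at hshift
  rw [← hshift]
  refine intervalIntegral.integral_congr fun r hr => ?_
  rw [uIcc_of_le ht] at hr
  exact (hS.apply_add hh hr.1 x).symm

theorem genRel_average [CompleteSpace E] (hS : IsC0Semigroup S) (x : E) {t : ℝ} (ht : 0 < t) :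
    C0GenRel S (t⁻¹ • ∫ r in (0:ℝ)..t, S r x) (t⁻¹ • (S t x - x)) := by
  refine (((hS.tendsto_slope_integral x ht.le).sub
    (hS.tendsto_average_integral x)).const_smul t⁻¹).congr' ?_
  filter_upwards [self_mem_nhdsWithin] with h (hh : 0 < h)
  rw [map_smul, hS.apply_integral x hh.le ht.le, add_comm h t]
  module

theorem dense_genRel_domain [CompleteSpace E] (hS : IsC0Semigroup S) :
    Dense {x | ∃ y, C0GenRel S x y} := by
  intro x
  refine mem_closure_of_tendsto (hS.tendsto_average_integral x) ?_
  filter_upwards [self_mem_nhdsWithin] with t (ht : 0 < t) using ⟨_, hS.genRel_average x ht⟩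

theorem continuousOn_apply_sub [CompleteSpace E] (hS : IsC0Semigroup S) {f : ℝ → E} {t : ℝ}
    (hf : ContinuousOn f (Icc 0 t)) : ContinuousOn (fun r => S (t - r) (f r)) (Icc 0 t) := by
  obtain ⟨M, -, hM⟩ := hS.exists_norm_le t
  intro r₀ hr₀
  have h₁ : Tendsto (fun r => S (t - r) (f r - f r₀)) (𝓝[Icc 0 t] r₀) (𝓝 0) := by
    refine squeeze_zero_norm' ?_ (by simpa using ((hf r₀ hr₀).sub_const (f r₀)).norm.const_mul M)
    filter_upwards [self_mem_nhdsWithin] with r hr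
    exact (S (t - r)).le_of_opNorm_le (hM _ ⟨sub_nonneg.2 hr.2, by linarith [hr.1]⟩) _
  have h₂ : ContinuousWithinAt (fun r => S (t - r) (f r₀)) (Icc 0 t) r₀ :=
    (hS.strongCont (f r₀)).comp (continuous_const.sub continuous_id).continuousOn
      (fun r hr => sub_nonneg.2 hr.2) r₀ hr₀
  simpa [ContinuousWithinAt] using h₁.add h₂

theorem isBiContSotSemigroup_implemented [CompleteSpace E] (hS : IsC0Semigroup S) :
    IsBiContSotSemigroup (implemented S) where
  map_zero := by ext C x; simp [hS.apply_zero]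
  map_add s t hs ht := by ext C x; simp [hS.apply_add hs ht]
  strongCont C x := hS.strongCont (C x)
  expBound := by
    obtain ⟨M, hM1, ω, hM⟩ := hS.exists_norm_le_exp
    refine ⟨M, hM1, ω, fun t ht => ?_⟩
    exact ContinuousLinearMap.opNorm_le_bound _ (by positivity) fun C =>
      (ContinuousLinearMap.opNorm_comp_le _ _).trans (by gcongr; exact hM t ht)
  biequi b _ u _ hu x ε hε := by
    obtain ⟨M, -, hM⟩ := hS.exists_norm_le b
    have hlim : Tendsto (fun n => M * ‖u n x‖) atTop (𝓝 0) := by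
      simpa using ((hu x).norm.const_mul M)
    obtain ⟨N, hN⟩ := ((tendsto_order.1 hlim).2 ε hε).exists_forall_of_atTop
    exact ⟨N, fun n hn t ht => ((S t).le_of_opNorm_le (hM t ht) _).trans_lt (hN n hn)⟩

theorem sotGenRel_implemented_iff [CompleteSpace E] (hS : IsC0Semigroup S) {C Y : E →L[ℝ] E} :
    SotGenRel (implemented S) C Y ↔ ∀ x, C0GenRel S (C x) (Y x) := by
  refine ⟨fun h => h.1, fun h => ⟨h, ?_⟩⟩
  obtain ⟨M, hM0, hM⟩ := hS.exists_norm_apply_sub_le_of_genRel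
  refine ⟨M * ‖Y‖, fun t ht => ContinuousLinearMap.opNorm_le_bound _
    (mul_nonneg (mul_nonneg hM0 (norm_nonneg _)) ht.1.le) fun x => ?_⟩
  calc ‖S t (C x) - C x‖ ≤ M * ‖Y x‖ * t := hM _ _ (h x) t ⟨ht.1.le, ht.2⟩
    _ ≤ M * (‖Y‖ * ‖x‖) * t :=
        mul_le_mul_of_nonneg_right (mul_le_mul_of_nonneg_left (Y.le_opNorm x) hM0) ht.1.le
    _ = M * ‖Y‖ * t * ‖x‖ := by ring

end IsC0Semigroup

section Backward

variable {S : ℝ → E →L[ℝ] E} {T₁ : ℝ → E₁ →L[ℝ] E₁} {ι : E →L[ℝ] E₁} {Am : E ≃L[ℝ] E₁}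
  {B : E →L[ℝ] E₁} {t₀ : ℝ}

/-- The norm bound of `V_B` already holds vector by vector: test `F` at `x` against the
rank-one function `r ↦ φ ⊗ F r x`, whose operator norm is controlled by `sup ‖F r x‖`. -/
theorem MemSDS.exists_norm_volterra_apply_le (hι : Function.Injective ι)
    (hB : MemSDS T₁ ι B t₀) :
    ∃ q : ℝ, 0 ≤ q ∧ q < 1 ∧
      ∀ F : ℝ → E →L[ℝ] E, (∀ x : E, ContinuousOn (fun r => F r x) (Icc (0:ℝ) t₀)) →
        ∃ G : ℝ → E →L[ℝ] E,
          (∀ t ∈ Icc (0:ℝ) t₀, ∀ x : E,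
            ι (G t x) = ∫ r in (0:ℝ)..t, T₁ (t - r) (B (F r x))) ∧
          (∀ x : E, ContinuousOn (fun t => G t x) (Icc (0:ℝ) t₀)) ∧
          ∀ t ∈ Icc (0:ℝ) t₀, ∀ (x : E) (c : ℝ),
            (∀ s ∈ Icc (0:ℝ) t₀, ‖F s x‖ ≤ c) → ‖G t x‖ ≤ q * c := by
  obtain ⟨q, hq0, hq1, hV⟩ := hB
  refine ⟨q, hq0, hq1, fun F hF => ?_⟩
  obtain ⟨G, hGid, hGc, -⟩ := hV F hF
  refine ⟨G, hGid, hGc, fun t ht x c hc => ?_⟩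
  obtain ⟨φ, hφ, hφx⟩ := exists_dual_smul_eq_self x
  obtain ⟨G', hG'id, -, hG'bd⟩ :=
    hV (fun r => φ.smulRight (F r x)) fun w => (hF x).const_smul (φ w)
  have hGG' : G t x = G' t x := hι <| by
    rw [hGid t ht, hG'id t ht]
    refine intervalIntegral.integral_congr fun r _ => ?_
    simp only [ContinuousLinearMap.smulRight_apply, ← map_smul, hφx]
  have hc0 : 0 ≤ c := (norm_nonneg _).trans (hc t ht)
  have hG'bd' : ‖G' t‖ ≤ q * (‖φ‖ * c) := hG'bd _ (fun s hs => by
    rw [ContinuousLinearMap.norm_smulRight_apply]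
    exact mul_le_mul_of_nonneg_left (hc s hs) (norm_nonneg φ)) t ht
  calc ‖G t x‖ = ‖G' t x‖ := by rw [hGG']
    _ ≤ q * (‖φ‖ * c) * ‖x‖ := (G' t).le_of_opNorm_le hG'bd' x
    _ = q * c * (‖φ‖ * ‖x‖) := by ring
    _ ≤ q * c := mul_le_of_le_one_right (mul_nonneg hq0 hc0) hφ

theorem exists_continuousLinearMap_of_volterra [CompleteSpace E₁] (hT₁ : IsC0Semigroup T₁)
    (hι : Function.Injective ι) {t : ℝ} (ht : 0 ≤ t)
    {P : ℝ → (E →L[ℝ] E) →L[ℝ] (E →L[ℝ] E)}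
    (hP : ∀ C x, ContinuousOn (fun r => P r C x) (Icc 0 t)) {V : (E →L[ℝ] E) → E →L[ℝ] E}
    (hV : ∀ C x, ι (V C x) = ∫ r in (0:ℝ)..t, T₁ (t - r) (B (P r C x))) {M : ℝ}
    (hM : ∀ C, ‖V C‖ ≤ M * ‖C‖) :
    ∃ L : (E →L[ℝ] E) →L[ℝ] (E →L[ℝ] E), ∀ C, L C = V C := by
  have hint : ∀ C x, IntervalIntegrable (fun r => T₁ (t - r) (B (P r C x))) volume 0 t :=
    fun C x => (hT₁.continuousOn_apply_sub
      (B.continuous.comp_continuousOn (hP C x))).intervalIntegrable_of_Icc ht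
  refine ⟨LinearMap.mkContinuous
    { toFun := V
      map_add' := fun C C' => ?_
      map_smul' := fun a C => ?_ } M hM, fun _ => rfl⟩
  · ext x
    apply hι
    simp only [add_apply, map_add, hV, ← intervalIntegral.integral_add (hint C x) (hint C' x)]
  · ext x
    apply hι
    simp only [smul_apply, map_smul, hV, RingHom.id_apply, ← intervalIntegral.integral_smul]

theorem memSDSsot_compL [CompleteSpace E₁] (hT₁ : IsC0Semigroup T₁) (hι : Function.Injective ι)
    (hB : MemSDS T₁ ι B t₀) : MemSDSsot T₁ ι (ContinuousLinearMap.compL ℝ E E E₁ B) t₀ := by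
  refine ⟨fun x => ⟨{x}, ‖B‖, norm_nonneg B, fun C => by simpa using B.le_opNorm (C x)⟩, ?_⟩
  obtain ⟨q, hq0, hq1, hV⟩ := hB.exists_norm_volterra_apply_le hι
  refine ⟨q, hq0, hq1, fun F ⟨hFc, ⟨MF, hMF⟩, hFbe⟩ => ?_⟩
  choose GG hGGid hGGc hGGbd using fun C => hV (fun r => F r C) (hFc C)
  have hGGnorm : ∀ C, ∀ t ∈ Icc (0:ℝ) t₀, ∀ c, (∀ s ∈ Icc (0:ℝ) t₀, ‖F s C‖ ≤ c) →
      ‖GG C t‖ ≤ q * c := fun C t ht c hc =>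
    ContinuousLinearMap.opNorm_le_bound _ (mul_nonneg hq0 ((norm_nonneg _).trans (hc t ht)))
      fun x => (hGGbd C t ht x _ fun s hs => (F s C).le_of_opNorm_le (hc s hs) x).trans_eq
        (mul_assoc _ _ _).symm
  have hlin : ∀ t, ∃ L : (E →L[ℝ] E) →L[ℝ] (E →L[ℝ] E),
      t ∈ Icc (0:ℝ) t₀ → ∀ C, L C = GG C t := by
    intro t
    by_cases ht : t ∈ Icc (0:ℝ) t₀
    · obtain ⟨L, hL⟩ := exists_continuousLinearMap_of_volterra hT₁ hι ht.1
        (fun C x => (hFc C x).mono (Icc_subset_Icc_right ht.2)) (hGGid · t ht)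
        fun C => (hGGnorm C t ht _ fun s hs => (F s).le_of_opNorm_le (hMF s hs) C).trans_eq
          (mul_assoc _ _ _).symm
      exact ⟨L, fun _ => hL⟩
    · exact ⟨0, fun h => absurd h ht⟩
  choose Ghat hGhat using hlin
  have hGhatnorm : ∀ c, (∀ s ∈ Icc (0:ℝ) t₀, ‖F s‖ ≤ c) → ∀ t ∈ Icc (0:ℝ) t₀,
      ‖Ghat t‖ ≤ q * c := fun c hc t ht =>
    ContinuousLinearMap.opNorm_le_bound _ (mul_nonneg hq0 ((norm_nonneg (F t)).trans (hc t ht)))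
      fun C => by
        rw [hGhat t ht, mul_assoc]
        exact hGGnorm C t ht _ fun s hs => (F s).le_of_opNorm_le (hc s hs) C
  refine ⟨Ghat, ⟨fun C x => (hGGc C x).congr fun t ht => by rw [hGhat t ht],
    ⟨q * MF, hGhatnorm MF hMF⟩, fun u hu hu0 x ε hε => ?_⟩,
    fun t ht C x => by rw [hGhat t ht, hGGid C t ht]; rfl, hGhatnorm⟩
  obtain ⟨N, hN⟩ := hFbe u hu hu0 x ε hε
  refine ⟨N, fun n hn t ht => ?_⟩
  rw [hGhat t ht]
  exact (hGGbd (u n) t ht x ε fun s hs => (hN n hn s hs).le).trans_lt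
    (mul_lt_of_lt_one_left hε hq1)

theorem exists_norm_implementedExt_compL_sub_le [CompleteSpace E]
    (hBfav : ∀ x : E, ∃ M : ℝ, ∀ s ∈ Ioo (0:ℝ) 1, ‖T₁ s (B x) - B x‖ ≤ M * s)
    (C : E →L[ℝ] E) : ∃ M : ℝ, ∀ s ∈ Ioo (0:ℝ) 1,
      ‖implementedExt T₁ s (ContinuousLinearMap.compL ℝ E E E₁ B C) -
        ContinuousLinearMap.compL ℝ E E E₁ B C‖ ≤ M * s := by
  obtain ⟨M, hM⟩ := exists_norm_le_mul_of_forall_norm_apply_le_mul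
    (P := fun s => (T₁ s).comp B - B) hBfav
  refine ⟨M * ‖C‖, fun s hs => ?_⟩
  calc ‖((T₁ s).comp B - B).comp C‖ ≤ ‖(T₁ s).comp B - B‖ * ‖C‖ :=
        ContinuousLinearMap.opNorm_comp_le _ _
    _ ≤ M * s * ‖C‖ := by gcongr; exact hM s hs
    _ = M * ‖C‖ * s := by ring

theorem generatedByPerturbedImpl_compL [CompleteSpace E] (hS : IsC0Semigroup S)
    (hBgen : ∀ x y : E, C0GenRel S x y ↔ ι y = Am x + B x) :
    GeneratedByPerturbedImpl (implemented S) ι Am (ContinuousLinearMap.compL ℝ E E E₁ B) := by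
  refine ⟨hS.isBiContSotSemigroup_implemented, fun C Y => ?_⟩
  rw [hS.sotGenRel_implemented_iff, ContinuousLinearMap.ext_iff]
  exact forall_congr' fun x => hBgen _ _

end Backward

section Forward

variable {S : ℝ → E →L[ℝ] E} {T₁ : ℝ → E₁ →L[ℝ] E₁} {ι : E →L[ℝ] E₁} {Am : E ≃L[ℝ] E₁}
  {K : (E →L[ℝ] E) →L[ℝ] (E →L[ℝ] E₁)} {t₀ : ℝ} {ψ : StrongDual ℝ E} {z : E}

theorem memXsot_rankOneLift [CompleteSpace E] {F : ℝ → E →L[ℝ] E}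
    (hF : ∀ x : E, ContinuousOn (fun r => F r x) (Icc (0:ℝ) t₀)) (ψ : StrongDual ℝ E) (z : E) :
    MemXsot t₀ fun r => rankOneLift ψ z (F r) := by
  obtain ⟨MF, hMF⟩ := exists_norm_le_of_continuousOn_Icc hF
  refine ⟨fun C x => (hF (C z)).const_smul (ψ x), ⟨‖ψ‖ * ‖z‖ * MF, fun t ht =>
    (norm_rankOneLift_le ψ z (F t)).trans (by gcongr; exact hMF t ht)⟩,
    fun u _ hu x ε hε => ?_⟩
  have hlim : Tendsto (fun n => ‖ψ x‖ * MF * ‖u n z‖) atTop (𝓝 0) := by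
    simpa using (hu z).norm.const_mul (‖ψ x‖ * MF)
  obtain ⟨N, hN⟩ := ((tendsto_order.1 hlim).2 ε hε).exists_forall_of_atTop
  refine ⟨N, fun n hn t ht => lt_of_le_of_lt ?_ (hN n hn)⟩
  calc ‖ψ x • F t (u n z)‖ = ‖ψ x‖ * ‖F t (u n z)‖ := norm_smul _ _
    _ ≤ ‖ψ x‖ * (MF * ‖u n z‖) := by gcongr; exact (F t).le_of_opNorm_le (hMF t ht) _
    _ = ‖ψ x‖ * MF * ‖u n z‖ := by ring

theorem memSDS_rankOneCompress [CompleteSpace E] (hψ : ‖ψ‖ * ‖z‖ ≤ 1)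
    (hψz : ∀ x : E, ψ z • x = x) (hK : MemSDSsot T₁ ι K t₀) :
    MemSDS T₁ ι (rankOneCompress ψ z K) t₀ := by
  obtain ⟨-, q, hq0, hq1, hV⟩ := hK
  refine ⟨q, hq0, hq1, fun F hF => ?_⟩
  obtain ⟨Ghat, hGX, hGid, hGbd⟩ := hV _ (memXsot_rankOneLift hF ψ z)
  refine ⟨fun t => rankOneCompress ψ z (Ghat t), fun t ht x => ?_, fun x => hGX.1 _ z,
    fun c hc t ht => ?_⟩
  · rw [rankOneCompress_apply, hGid t ht]
    refine intervalIntegral.integral_congr fun r _ => ?_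
    simp only [rankOneLift_apply, ContinuousLinearMap.smulRight_apply, hψz,
      rankOneCompress_apply]
  · have hc0 : 0 ≤ c := (norm_nonneg (F t)).trans (hc t ht)
    have hGt : ‖Ghat t‖ ≤ q * c := hGbd c (fun s hs => (norm_rankOneLift_le ψ z (F s)).trans
      (by simpa using mul_le_mul hψ (hc s hs) (norm_nonneg _) zero_le_one)) t ht
    calc ‖rankOneCompress ψ z (Ghat t)‖ ≤ ‖ψ‖ * ‖z‖ * ‖Ghat t‖ := norm_rankOneCompress_le ψ z _
      _ ≤ 1 * (q * c) := mul_le_mul hψ hGt (norm_nonneg (Ghat t)) zero_le_one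
      _ = q * c := one_mul _

theorem exists_norm_apply_rankOneCompress_le
    (hKfav : ∀ C : E →L[ℝ] E, ∃ M : ℝ, ∀ s ∈ Ioo (0:ℝ) 1,
      ‖implementedExt T₁ s (K C) - K C‖ ≤ M * s) (x : E) :
    ∃ M : ℝ, ∀ s ∈ Ioo (0:ℝ) 1,
      ‖T₁ s (rankOneCompress ψ z K x) - rankOneCompress ψ z K x‖ ≤ M * s := by
  obtain ⟨M, hM⟩ := hKfav (ψ.smulRight x)
  refine ⟨M * ‖z‖, fun s hs => ?_⟩
  calc ‖(implementedExt T₁ s (K (ψ.smulRight x)) - K (ψ.smulRight x)) z‖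
      ≤ M * s * ‖z‖ := ContinuousLinearMap.le_of_opNorm_le _ (hM s hs) z
    _ = M * ‖z‖ * s := by ring

namespace GeneratedByPerturbedImpl

theorem sotGenRel_smulRight_iff [CompleteSpace E] (hS : IsC0Semigroup S)
    (hψz : ∀ x : E, ψ z • x = x) {x y : E} :
    SotGenRel (implemented S) (ψ.smulRight x) (ψ.smulRight y) ↔ C0GenRel S x y := by
  rw [hS.sotGenRel_implemented_iff]
  refine ⟨fun h => ?_, fun h w => h.const_smul (ψ w)⟩
  simpa only [ContinuousLinearMap.smulRight_apply, hψz] using h z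

theorem apply_smulRight [CompleteSpace E] (hS : IsC0Semigroup S) (hψz : ∀ x : E, ψ z • x = x)
    (hGen : GeneratedByPerturbedImpl (implemented S) ι Am K) (x : E) :
    K (ψ.smulRight x) = ψ.smulRight (rankOneCompress ψ z K x) := by
  have hdom : ∀ x y, C0GenRel S x y → K (ψ.smulRight x) = ψ.smulRight (ι y - Am x) := by
    intro x y hxy
    have h := (hGen.2 _ _).1 ((sotGenRel_smulRight_iff hS hψz).2 hxy)
    ext w
    simp only [ContinuousLinearMap.ext_iff, ContinuousLinearMap.comp_apply, add_apply,
      ContinuousLinearMap.smulRight_apply, map_smul, ContinuousLinearEquiv.coe_coe] at h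
    rw [ContinuousLinearMap.smulRight_apply, smul_sub, h w, add_sub_cancel_left]
  have hB : ∀ x y, C0GenRel S x y → rankOneCompress ψ z K x = ι y - Am x := by
    intro x y hxy
    rw [rankOneCompress_apply, hdom x y hxy, ContinuousLinearMap.smulRight_apply, smul_sub,
      ← map_smul, ← map_smul, hψz, hψz]
  refine congrFun (Continuous.ext_on hS.dense_genRel_domain
    (K.comp (ContinuousLinearMap.smulRightL ℝ E E ψ)).continuous
    ((ContinuousLinearMap.smulRightL ℝ E E₁ ψ).comp (rankOneCompress ψ z K)).continuous ?_) x
  rintro x ⟨y, hxy⟩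
  change K (ψ.smulRight x) = ψ.smulRight (rankOneCompress ψ z K x)
  rw [hdom x y hxy, hB x y hxy]

theorem genRel_iff [CompleteSpace E] (hS : IsC0Semigroup S) (hψz : ∀ x : E, ψ z • x = x)
    (hGen : GeneratedByPerturbedImpl (implemented S) ι Am K) (x y : E) :
    C0GenRel S x y ↔ ι y = Am x + rankOneCompress ψ z K x := by
  rw [← sotGenRel_smulRight_iff hS hψz, hGen.2, apply_smulRight hS hψz hGen]
  constructor
  · intro h
    have hz := congrArg (· z) h
    simp only [ContinuousLinearMap.comp_apply, add_apply, ContinuousLinearMap.smulRight_apply,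
      hψz, ContinuousLinearEquiv.coe_coe] at hz
    rwa [← map_smul, hψz] at hz
  · intro h
    ext w
    simp [h, smul_add]

end GeneratedByPerturbedImpl

end Forward

theorem stmt_14_general [CompleteSpace E] [CompleteSpace E₁]
    (T S : ℝ → E →L[ℝ] E) (T₁ : ℝ → E₁ →L[ℝ] E₁) (ι : E →L[ℝ] E₁) (Am : E ≃L[ℝ] E₁)
    (hExt : ExtrapolationData T T₁ ι Am) (hS : IsC0Semigroup S)
    (t₀ : ℝ) :
    (∃ K : (E →L[ℝ] E) →L[ℝ] (E →L[ℝ] E₁), MemSDSsot T₁ ι K t₀ ∧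
        (∀ C : E →L[ℝ] E, ∃ M' : ℝ, ∀ s ∈ Ioo (0:ℝ) 1,
          ‖implementedExt T₁ s (K C) - K C‖ ≤ M' * s) ∧
        GeneratedByPerturbedImpl (implemented S) ι Am K) ↔
      (∃ B : E →L[ℝ] E₁, MemSDS T₁ ι B t₀ ∧
        (∀ x : E, ∃ M' : ℝ, ∀ s ∈ Ioo (0:ℝ) 1, ‖T₁ s (B x) - B x‖ ≤ M' * s) ∧
        ∀ x y : E, C0GenRel S x y ↔ ι y = Am x + B x) := by
  constructor
  · rintro ⟨K, hK, hKfav, hGen⟩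
    obtain ⟨z, ψ, hψ, hψz⟩ := exists_dual_pair_smul_eq_self (F := E)
    exact ⟨rankOneCompress ψ z K, memSDS_rankOneCompress hψ hψz hK,
      exists_norm_apply_rankOneCompress_le hKfav, hGen.genRel_iff hS hψz⟩
  · rintro ⟨B, hB, hBfav, hBgen⟩
    exact ⟨ContinuousLinearMap.compL ℝ E E E₁ B, memSDSsot_compL hExt.c0T₁ hExt.inj hB,
      exists_norm_implementedExt_compL_sub_le hBfav, generatedByPerturbedImpl_compL hS hBgen⟩

/-- `𝒱` arises from the implemented semigroup `𝒰` by a Desch–Schappacher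
perturbation with range in `F₀(𝒢)` iff `S` arises from `T` by a Desch–Schappacher perturbation
with range in `F₀(A)`. -/
theorem stmt_14 [CompleteSpace E] [CompleteSpace E₁]
    (T S : ℝ → E →L[ℝ] E) (T₁ : ℝ → E₁ →L[ℝ] E₁) (ι : E →L[ℝ] E₁) (Am : E ≃L[ℝ] E₁)
    (hExt : ExtrapolationData T T₁ ι Am) (hS : IsC0Semigroup S)
    (t₀ : ℝ) (ht₀ : 0 < t₀) :
    (∃ K : (E →L[ℝ] E) →L[ℝ] (E →L[ℝ] E₁), MemSDSsot T₁ ι K t₀ ∧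
        (∀ C : E →L[ℝ] E, ∃ M' : ℝ, ∀ s ∈ Ioo (0:ℝ) 1,
          ‖implementedExt T₁ s (K C) - K C‖ ≤ M' * s) ∧
        GeneratedByPerturbedImpl (implemented S) ι Am K) ↔
      (∃ B : E →L[ℝ] E₁, MemSDS T₁ ι B t₀ ∧
        (∀ x : E, ∃ M' : ℝ, ∀ s ∈ Ioo (0:ℝ) 1, ‖T₁ s (B x) - B x‖ ≤ M' * s) ∧
        ∀ x y : E, C0GenRel S x y ↔ ι y = Am x + B x) :=
  stmt_14_general T S T₁ ι Am hExt hS t₀
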